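/- Let r > 2 and ℓ ≥ 1 be given. Then there exist an integer ℓ′ ≥ 1 and a constant c, both depending only on r and ℓ, such that for every (0,1)-matrix F and every m ≥ 1, forb(m, r, (𝒯_ℓ(r) \ 𝒯_ℓ(2)) ∪ {F}) ≤ c · forb(m, 3, (𝒯_{ℓ′}(3) \ 𝒯_{ℓ′}(2)) ∪ {F}). -/

import Mathlib

/-- A matrix with natural number entries, of size `k × p`. -/
abbrev MatN (k p : ℕ) := Matrix (Fin k) (Fin p) ℕ

/-- A matrix bundled with its dimensions. -/
structure CMat where
  rows : ℕ
  cols : ℕ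
  mat : MatN rows cols

/-- A matrix is simple if no two of its columns are equal. -/
def SimpleM {m n : ℕ} (A : MatN m n) : Prop :=
  ∀ j₁ j₂ : Fin n, (∀ i, A i j₁ = A i j₂) → j₁ = j₂

/-- An `r`-matrix: all entries lie in `{0, 1, …, r-1}`. -/
def RMat (r : ℕ) {m n : ℕ} (A : MatN m n) : Prop := ∀ i j, A i j < r

/-- `F` is a configuration of `A` (written `F ≺ A`): some submatrix of `A` is a row
and column permutation of `F`; equivalently there are injections of the rows and
columns of `F` into those of `A` realizing the entries of `F`. -/
def IsConfig {k p m n : ℕ} (F : MatN k p) (A : MatN m n) : Prop :=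
  ∃ f : Fin k → Fin m, ∃ g : Fin p → Fin n,
    Function.Injective f ∧ Function.Injective g ∧ ∀ i j, A (f i) (g j) = F i j

/-- `A` avoids every matrix of the family `𝓕` as a configuration. -/
def AvoidsFam {m n : ℕ} (A : MatN m n) (𝓕 : Set CMat) : Prop :=
  ∀ F ∈ 𝓕, ¬ IsConfig F.mat A

/-- `forb m r 𝓕`: the maximum number of columns of an `m`-rowed simple `r`-matrix
having no member of `𝓕` as a configuration. -/
noncomputable def forb (m r : ℕ) (𝓕 : Set CMat) : ℕ :=
  sSup { n : ℕ | ∃ A : MatN m n, RMat r A ∧ SimpleM A ∧ AvoidsFam A 𝓕 }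

/-- `forbmax m r 𝓕`: the maximum of `forb m' r 𝓕` over `m' ≤ m`. -/
noncomputable def forbmax (m r : ℕ) (𝓕 : Set CMat) : ℕ :=
  sSup { x : ℕ | ∃ m' ≤ m, x = forb m' r 𝓕 }

/-- The number of 1's in column `j` of `A` (the column sum). -/
def colSum {m n : ℕ} (A : MatN m n) (j : Fin n) : ℕ :=
  (Finset.univ.filter (fun i => A i j = 1)).card

/-- `forbK k m r 𝓕`: as `forb`, but restricted to matrices all of whose columns
have exactly `k` entries equal to 1. -/
noncomputable def forbK (k m r : ℕ) (𝓕 : Set CMat) : ℕ :=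
  sSup { n : ℕ | ∃ A : MatN m n, RMat r A ∧ SimpleM A ∧ (∀ j, colSum A j = k) ∧
    AvoidsFam A 𝓕 }

/-- `forbmaxK k m r 𝓕`: the maximum of `forbK k m' r 𝓕` over `m' ≤ m`. -/
noncomputable def forbmaxK (k m r : ℕ) (𝓕 : Set CMat) : ℕ :=
  sSup { x : ℕ | ∃ m' ≤ m, x = forbK k m' r 𝓕 }

/-- `Imat ℓ a b`: the `ℓ × ℓ` matrix with `a` on the diagonal and `b` off the diagonal. -/
def Imat (ℓ a b : ℕ) : MatN ℓ ℓ := fun i j => if i = j then a else b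

/-- `Tmat ℓ a b`: the `ℓ × ℓ` matrix with `a` below the diagonal and `b` on or above it. -/
def Tmat (ℓ a b : ℕ) : MatN ℓ ℓ := fun i j => if (j : ℕ) < (i : ℕ) then a else b

/-- `Tmat3 ℓ a b c`: the `ℓ × ℓ` matrix with `a` below, `b` on, and `c` above the diagonal. -/
def Tmat3 (ℓ a b c : ℕ) : MatN ℓ ℓ :=
  fun i j => if (j : ℕ) < (i : ℕ) then a else if i = j then b else c

/-- The family `𝒯_ℓ(r)` of all `I_ℓ(a,b)` and `T_ℓ(a,b)` with `a,b ∈ {0,…,r-1}`, `a ≠ b`. -/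
def TFam (ℓ r : ℕ) : Set CMat :=
  { M | ∃ a b : ℕ, a < r ∧ b < r ∧ a ≠ b ∧
      (M = ⟨ℓ, ℓ, Imat ℓ a b⟩ ∨ M = ⟨ℓ, ℓ, Tmat ℓ a b⟩) }

/-- `t·F`: the concatenation of `t` copies of `F` side by side. -/
def tcopies {k p : ℕ} (t : ℕ) (F : MatN k p) : MatN k (t * p) :=
  fun i j => F i ⟨(j : ℕ) % p, Nat.mod_lt _ (by
    rcases Nat.eq_zero_or_pos p with h | h
    · exact absurd j.isLt (by simp [h])
    · exact h)⟩

/-- `0×1×F`: `F` with an extra row of 0's and an extra row of 1's appended. -/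
def zeroOneTop {k p : ℕ} (F : MatN k p) : MatN (k + 2) p :=
  fun i j => if h : (i : ℕ) < k then F ⟨i, h⟩ j else if (i : ℕ) = k then 0 else 1

/-- `F_{a,b,c,d}`: the `(a+b+c+d) × 2` matrix with `a` rows `[1 1]`, `b` rows `[1 0]`,
`c` rows `[0 1]` and `d` rows `[0 0]`. -/
def Fabcd (a b c d : ℕ) : MatN (a + b + c + d) 2 :=
  fun i j =>
    if (i : ℕ) < a then 1
    else if (i : ℕ) < a + b then (if (j : ℕ) = 0 then 1 else 0)
    else if (i : ℕ) < a + b + c then (if (j : ℕ) = 0 then 0 else 1)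
    else 0

/-!
The number of symbols is lowered one at a time. Replace the symbol `s + 1` by `s` in a simple
`(s+2)`-matrix `A` avoiding `(𝒯_ℓ(s+2) \ 𝒯_ℓ(2)) ∪ {F}` and delete repeated columns. The result
still avoids the (0,1)-matrix `F`, and it avoids `𝒯_{ℓ₂}(s+1) \ 𝒯_{ℓ₂}(2)` for `ℓ₂` large: by
Ramsey's theorem a big collapsed `I` or `T` matrix contains a lifted square on which `A` is
constant below, on and above the diagonal, and such a square contains an `I_ℓ` or `T_ℓ` of `A`
that still uses a symbol `≥ 2`. The columns merged into a single one form, on the rows where they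
read `s`, a simple `{s, s+1}`-matrix avoiding every `I_ℓ` and `T_ℓ`, so by the Balogh–Bollobás
argument there are boundedly many of them. Iterating from `r` down to `3` gives the theorem, and
`ℓ = 1` reduces to `ℓ = 2`.
-/

open Matrix

lemma IsConfig.refl {k p : ℕ} (F : MatN k p) : IsConfig F F :=
  ⟨id, id, Function.injective_id, Function.injective_id, fun _ _ => rfl⟩

lemma IsConfig.trans {k p m n M N : ℕ} {F : MatN k p} {B : MatN m n} {A : MatN M N}
    (h₁ : IsConfig F B) (h₂ : IsConfig B A) : IsConfig F A := by
  obtain ⟨f₁, g₁, hf₁, hg₁, he₁⟩ := h₁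
  obtain ⟨f₂, g₂, hf₂, hg₂, he₂⟩ := h₂
  exact ⟨f₂ ∘ f₁, g₂ ∘ g₁, hf₂.comp hf₁, hg₂.comp hg₁, fun i j => by simp [he₂, he₁]⟩

lemma isConfig_submatrix {m n k p : ℕ} (A : MatN m n) {f : Fin k → Fin m} {g : Fin p → Fin n}
    (hf : Function.Injective f) (hg : Function.Injective g) : IsConfig (A.submatrix f g) A :=
  ⟨f, g, hf, hg, fun _ _ => rfl⟩

lemma RMat.of_isConfig {r k p m n : ℕ} {F : MatN k p} {A : MatN m n} (hA : RMat r A)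
    (h : IsConfig F A) : RMat r F := by
  obtain ⟨f, g, -, -, hfg⟩ := h
  exact fun i j => hfg i j ▸ hA _ _

lemma card_le_pow_of_simpleM {r m n : ℕ} {A : MatN m n} (hA : RMat r A) (hS : SimpleM A) :
    n ≤ r ^ m := by
  have hinj : Function.Injective fun j : Fin n => fun i : Fin m => (⟨A i j, hA i j⟩ : Fin r) :=
    fun j₁ j₂ h => hS j₁ j₂ fun i => congrArg Fin.val (congrFun h i)
  simpa using Fintype.card_le_of_injective _ hinj

lemma le_forb {m r n : ℕ} {𝓕 : Set CMat} (A : MatN m n) (hA : RMat r A) (hS : SimpleM A)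
    (hF : AvoidsFam A 𝓕) : n ≤ forb m r 𝓕 :=
  le_csSup ⟨r ^ m, fun _ ⟨_, hA, hS, _⟩ => card_le_pow_of_simpleM hA hS⟩ ⟨A, hA, hS, hF⟩

lemma forb_le {m r B : ℕ} {𝓕 : Set CMat}
    (h : ∀ n (A : MatN m n), RMat r A → SimpleM A → AvoidsFam A 𝓕 → n ≤ B) :
    forb m r 𝓕 ≤ B :=
  csSup_le' fun n ⟨A, hA, hS, hF⟩ => h n A hA hS hF

lemma forb_anti {m r : ℕ} {𝓕 𝓖 : Set CMat} (h : ∀ G ∈ 𝓖, ∃ F ∈ 𝓕, IsConfig F.mat G.mat) :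
    forb m r 𝓕 ≤ forb m r 𝓖 :=
  forb_le fun _ A hA hS hF => le_forb A hA hS fun G hG hGA =>
    let ⟨F, hF𝓕, hFG⟩ := h G hG
    hF F hF𝓕 (hFG.trans hGA)

section Ramsey

variable {κ : Type*} [Fintype κ]

-- Each greedy step keeps the least element and the largest class of the colours of its pairs
-- with the remaining elements.
def greedyBound (c : ℕ) : ℕ → ℕ
  | 0 => 0
  | t + 1 => c * greedyBound c t + 1

lemma exists_strictMono_colour_eq_of_lt {α : Type*} [LinearOrder α] (col : α → α → κ) :
    ∀ (t : ℕ) (S : Finset α), greedyBound (Fintype.card κ) t ≤ S.card →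
      ∃ x : Fin t → α, StrictMono x ∧ (∀ i, x i ∈ S) ∧
        ∃ a : Fin t → κ, ∀ i j, i < j → col (x i) (x j) = a i := by
  intro t
  induction t with
  | zero => exact fun _ _ => ⟨Fin.elim0, fun i => i.elim0, fun i => i.elim0, Fin.elim0,
      fun i => i.elim0⟩
  | succ t ih =>
    intro S hS
    classical
    simp only [greedyBound] at hS
    have hne : S.Nonempty := Finset.card_pos.mp (by omega)
    set x₀ := S.min' hne
    have hS' : Fintype.card κ * greedyBound (Fintype.card κ) t ≤ (S.erase x₀).card := by
      rw [Finset.card_erase_of_mem (S.min'_mem hne)]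
      omega
    obtain ⟨b, -, hb⟩ := Finset.exists_le_card_fiber_of_mul_le_card_of_maps_to (f := col x₀)
      (fun _ _ => Finset.mem_univ _) ⟨col x₀ x₀, Finset.mem_univ _⟩ (by simpa using hS')
    obtain ⟨x, hx, hxS, a, ha⟩ := ih _ hb
    have hxS' : ∀ i, x i ∈ S ∧ x i ≠ x₀ ∧ col x₀ (x i) = b := fun i => by
      simpa [and_comm, and_assoc] using hxS i
    refine ⟨Fin.cons x₀ x, Fin.strictMono_cons.2 ⟨fun i => ?_, hx⟩,
      Fin.cases (S.min'_mem hne) fun i => (hxS' i).1, Fin.cons b a, ?_⟩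
    · exact lt_of_le_of_ne (S.min'_le _ (hxS' i).1) (hxS' i).2.1.symm
    · intro i j hij
      cases i using Fin.cases with
      | zero =>
        cases j using Fin.cases with
        | zero => exact absurd hij (lt_irrefl _)
        | succ j => simpa using (hxS' j).2.2
      | succ i =>
        cases j using Fin.cases with
        | zero => exact absurd hij (Fin.not_lt_zero _)
        | succ j => simpa using ha i j (Fin.succ_lt_succ_iff.mp hij)

theorem exists_strictMono_monochromatic (κ : Type*) [Fintype κ] (k : ℕ) :
    ∃ R, ∀ N, R ≤ N → ∀ col : Fin N → Fin N → κ,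
      ∃ σ : Fin k → Fin N, StrictMono σ ∧ ∃ c, ∀ i j, i < j → col (σ i) (σ j) = c := by
  classical
  refine ⟨greedyBound (Fintype.card κ) (Fintype.card κ * k) + 1, fun N hN col => ?_⟩
  obtain ⟨x, hx, -, a, ha⟩ :=
    exists_strictMono_colour_eq_of_lt col (Fintype.card κ * k) Finset.univ
      (by simp only [Finset.card_univ, Fintype.card_fin]; omega)
  have c₀ : κ := col ⟨0, by omega⟩ ⟨0, by omega⟩
  obtain ⟨c, -, hc⟩ := Finset.exists_le_card_fiber_of_mul_le_card_of_maps_to (f := a)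
    (s := Finset.univ) (n := k) (fun _ _ => Finset.mem_univ _) ⟨c₀, Finset.mem_univ _⟩
    (by simp)
  obtain ⟨T, hT, hTcard⟩ := Finset.exists_subset_card_eq hc
  set τ := T.orderEmbOfFin hTcard
  refine ⟨x ∘ τ, hx.comp τ.strictMono, c, fun i j hij => ?_⟩
  rw [Function.comp_apply, Function.comp_apply, ha _ _ (τ.strictMono hij)]
  exact (Finset.mem_filter.mp (hT (T.orderEmbOfFin_mem hTcard i))).2

end Ramsey

section Tmat3

variable {K a b c : ℕ} {i j : Fin K}

lemma Tmat3_apply_of_lt (h : j < i) : Tmat3 K a b c i j = a := if_pos h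

lemma Tmat3_apply_self : Tmat3 K a b c i i = b := by simp [Tmat3]

lemma Tmat3_apply_of_gt (h : i < j) : Tmat3 K a b c i j = c := by
  simp [Tmat3, h.ne, not_lt.mpr h.le]

lemma Tmat3_eq_Imat (K a b : ℕ) : Tmat3 K a b a = Imat K b a := by
  ext i j
  simp only [Tmat3, Imat]
  split_ifs <;> first | rfl | omega

lemma Tmat3_mem_of_forall_mem {V : Finset ℕ} (hK : 2 ≤ K) (h : ∀ i j, Tmat3 K a b c i j ∈ V) :
    a ∈ V ∧ b ∈ V ∧ c ∈ V := by
  have h01 : (⟨0, by omega⟩ : Fin K) < ⟨1, by omega⟩ := Fin.mk_lt_mk.mpr one_pos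
  refine ⟨?_, ?_, ?_⟩
  · simpa only [Tmat3_apply_of_lt h01] using h ⟨1, by omega⟩ ⟨0, by omega⟩
  · simpa only [Tmat3_apply_self] using h ⟨0, by omega⟩ ⟨0, by omega⟩
  · simpa only [Tmat3_apply_of_gt h01] using h ⟨0, by omega⟩ ⟨1, by omega⟩

lemma injective_of_submatrix_eq_Tmat3 {m n : ℕ} {A : MatN m n} {f : Fin K → Fin m}
    {g : Fin K → Fin n} (hbc : b ≠ c) (h : A.submatrix f g = Tmat3 K a b c) :
    Function.Injective f ∧ Function.Injective g := by
  have hA : ∀ i j, A (f i) (g j) = Tmat3 K a b c i j := fun i j => congrFun₂ h i j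
  refine ⟨.of_lt_imp_ne fun i j hij hf => hbc ?_, .of_lt_imp_ne fun i j hij hg => hbc ?_⟩
  · calc b = A (f j) (g j) := by rw [hA, Tmat3_apply_self]
      _ = c := by rw [← hf, hA, Tmat3_apply_of_gt hij]
  · calc b = A (f i) (g i) := by rw [hA, Tmat3_apply_self]
      _ = c := by rw [hg, hA, Tmat3_apply_of_gt hij]

end Tmat3

lemma isConfig_Imat_of_le {ℓ K : ℕ} (h : ℓ ≤ K) (a b : ℕ) : IsConfig (Imat ℓ a b) (Imat K a b) :=
  ⟨Fin.castLE h, Fin.castLE h, Fin.castLE_injective h, Fin.castLE_injective h,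
    fun i j => by simp [Imat]⟩

-- Rows `2i` and columns `2j + 1` never meet on the diagonal.
lemma isConfig_Tmat_Tmat3 {ℓ K : ℕ} (h : 2 * ℓ ≤ K) (a b c : ℕ) :
    IsConfig (Tmat ℓ a c) (Tmat3 K a b c) := by
  refine ⟨fun i => ⟨2 * i, by omega⟩, fun j => ⟨2 * j + 1, by omega⟩,
    fun i i' h => by simpa [Fin.ext_iff] using h, fun j j' h => by simpa [Fin.ext_iff] using h,
    fun i j => ?_⟩
  simp only [Tmat3, Tmat, Fin.mk.injEq]
  split_ifs <;> first | rfl | omega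

lemma exists_submatrix_eq_Tmat3 (V : Finset ℕ) (K : ℕ) :
    ∃ R, ∀ N, R ≤ N → ∀ B : MatN N N, (∀ i j, B i j ∈ V) →
      ∃ σ : Fin K → Fin N, StrictMono σ ∧ ∃ a b c, B.submatrix σ σ = Tmat3 K a b c := by
  obtain ⟨R, hR⟩ := exists_strictMono_monochromatic (V × V × V) (K + 1)
  refine ⟨R, fun N hN B hB => ?_⟩
  obtain ⟨σ, hσ, ⟨a, b, c⟩, hc⟩ :=
    hR N hN fun i j => (⟨B j i, hB j i⟩, ⟨B i i, hB i i⟩, ⟨B i j, hB i j⟩)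
  have hcol : ∀ i j, i < j → B (σ j) (σ i) = a ∧ B (σ i) (σ i) = b ∧ B (σ i) (σ j) = c :=
    fun i j hij => by simpa [Subtype.ext_iff] using hc i j hij
  -- the extra last index of `σ` provides the diagonal entries
  refine ⟨σ ∘ Fin.castSucc, hσ.comp Fin.strictMono_castSucc, a, b, c, ?_⟩
  ext i j
  simp only [submatrix_apply, Function.comp_apply, Tmat3]
  split_ifs with hji hij
  · exact (hcol _ _ (Fin.castSucc_lt_castSucc_iff.mpr hji)).1
  · exact hij ▸ (hcol _ _ (Fin.castSucc_lt_last i)).2.1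
  · exact (hcol _ _ (Fin.castSucc_lt_castSucc_iff.mpr
      (lt_of_le_of_ne (not_lt.mp hji) hij))).2.2

lemma notMem_TFam_two {ℓ : ℕ} {X : MatN ℓ ℓ} (h : ∃ i j, 2 ≤ X i j) :
    (⟨ℓ, ℓ, X⟩ : CMat) ∉ TFam ℓ 2 := by
  rintro ⟨a, b, ha, hb, -, hX | hX⟩ <;>
  · obtain ⟨i, j, hij⟩ := h
    simp only [CMat.mk.injEq, heq_eq_eq, true_and] at hX
    subst hX
    simp only [Imat, Tmat] at hij
    split_ifs at hij <;> omega

lemma Imat_mem_nonbinary {ℓ r a b : ℕ} (hℓ : 2 ≤ ℓ) (ha : a < r) (hb : b < r) (hab : a ≠ b)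
    (h2 : 2 ≤ a ∨ 2 ≤ b) : (⟨ℓ, ℓ, Imat ℓ a b⟩ : CMat) ∈ TFam ℓ r \ TFam ℓ 2 := by
  refine ⟨⟨a, b, ha, hb, hab, Or.inl rfl⟩, notMem_TFam_two ?_⟩
  rcases h2 with h2 | h2
  · exact ⟨⟨0, by omega⟩, ⟨0, by omega⟩, by simpa [Imat]⟩
  · exact ⟨⟨0, by omega⟩, ⟨1, by omega⟩, by simpa [Imat]⟩

lemma Tmat_mem_nonbinary {ℓ r a b : ℕ} (hℓ : 2 ≤ ℓ) (ha : a < r) (hb : b < r) (hab : a ≠ b)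
    (h2 : 2 ≤ a ∨ 2 ≤ b) : (⟨ℓ, ℓ, Tmat ℓ a b⟩ : CMat) ∈ TFam ℓ r \ TFam ℓ 2 := by
  refine ⟨⟨a, b, ha, hb, hab, Or.inr rfl⟩, notMem_TFam_two ?_⟩
  rcases h2 with h2 | h2
  · exact ⟨⟨1, by omega⟩, ⟨0, by omega⟩, by simpa [Tmat]⟩
  · exact ⟨⟨0, by omega⟩, ⟨0, by omega⟩, by simpa [Tmat]⟩

lemma exists_two_le_entry_of_mem_nonbinary {ℓ r : ℕ} (hℓ : 2 ≤ ℓ) {M : CMat}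
    (hM : M ∈ TFam ℓ r \ TFam ℓ 2) : ∃ i j, 2 ≤ M.mat i j ∧ M.mat i j < r := by
  obtain ⟨⟨a, b, ha, hb, hab, rfl | rfl⟩, hM2⟩ := hM
  all_goals
    have h2 : 2 ≤ a ∨ 2 ≤ b := by
      by_contra! h
      exact hM2 ⟨a, b, h.1, h.2, hab, by simp⟩
    dsimp only
  · rcases h2 with h2 | h2
    · exact ⟨⟨0, by omega⟩, ⟨0, by omega⟩, by simp [Imat]; omega⟩
    · exact ⟨⟨0, by omega⟩, ⟨1, by omega⟩, by simp [Imat]; omega⟩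
  · rcases h2 with h2 | h2
    · exact ⟨⟨1, by omega⟩, ⟨0, by omega⟩, by simp [Tmat]; omega⟩
    · exact ⟨⟨0, by omega⟩, ⟨0, by omega⟩, by simp [Tmat]; omega⟩

lemma exists_nonbinary_isConfig_Tmat3 {ℓ r a b c : ℕ} (hℓ : 2 ≤ ℓ) (ha : a < r) (hb : b < r)
    (hc : c < r) (hI : a = c → b ≠ c ∧ (2 ≤ b ∨ 2 ≤ c)) (hT : a ≠ c → 2 ≤ a ∨ 2 ≤ c) :
    ∃ M ∈ TFam ℓ r \ TFam ℓ 2, IsConfig M.mat (Tmat3 (2 * ℓ) a b c) := by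
  by_cases hac : a = c
  · subst hac
    rw [Tmat3_eq_Imat]
    exact ⟨_, Imat_mem_nonbinary hℓ hb ha (hI rfl).1 (hI rfl).2,
      isConfig_Imat_of_le (ℓ := ℓ) (by omega) b a⟩
  · exact ⟨_, Tmat_mem_nonbinary hℓ ha hc hac (hT hac), isConfig_Tmat_Tmat3 le_rfl a b c⟩

/-- Split `C` by the values in a row on which two of its columns differ, recurse into the
largest part and take the new column outside it. -/
lemma exists_separating_rows_cols {m n b : ℕ} (A : MatN m n) (P : Finset (Fin m))
    (V : Finset ℕ) (hb : 2 ≤ b) (hVb : V.card ≤ b) :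
    ∀ (t : ℕ) (C : Finset (Fin n)), (∀ i ∈ P, ∀ j ∈ C, A i j ∈ V) →
      (∀ j₁ ∈ C, ∀ j₂ ∈ C, j₁ ≠ j₂ → ∃ i ∈ P, A i j₁ ≠ A i j₂) → b ^ t ≤ C.card →
      ∃ (ρ : Fin t → Fin m) (w : Fin t → Fin n), (∀ i, ρ i ∈ P) ∧ (∀ i, w i ∈ C) ∧
        ∀ i j, i < j → A (ρ i) (w j) ≠ A (ρ i) (w i) := by
  intro t
  induction t with
  | zero => exact fun _ _ _ _ => ⟨Fin.elim0, Fin.elim0, fun i => i.elim0, fun i => i.elim0,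
      fun i => i.elim0⟩
  | succ t ih =>
    intro C hCV hCsep hC
    classical
    obtain ⟨p, hp, q, hq, hpq⟩ := Finset.one_lt_card.mp <| show 1 < C.card by
      have : 2 ≤ b ^ (t + 1) := hb.trans (Nat.le_self_pow (by omega) b)
      omega
    obtain ⟨ρ₀, hρ₀, hpq⟩ := hCsep p hp q hq hpq
    obtain ⟨y, -, hy⟩ := Finset.exists_le_card_fiber_of_mul_le_card_of_maps_to
      (f := A ρ₀) (n := b ^ t) (fun j hj => hCV ρ₀ hρ₀ j hj) ⟨_, hCV ρ₀ hρ₀ p hp⟩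
      (by rw [pow_succ] at hC; nlinarith)
    set L := C.filter fun j => A ρ₀ j = y
    have hLC : L ⊆ C := Finset.filter_subset _ _
    obtain ⟨ρ, w, hρP, hwL, hsep⟩ := ih L (fun i hi j hj => hCV i hi j (hLC hj))
      (fun j₁ h₁ j₂ h₂ => hCsep j₁ (hLC h₁) j₂ (hLC h₂)) hy
    obtain ⟨w₀, hw₀C, hw₀⟩ : ∃ w₀ ∈ C, A ρ₀ w₀ ≠ y := by
      by_cases hpy : A ρ₀ p = y
      · exact ⟨q, hq, hpy ▸ hpq.symm⟩
      · exact ⟨p, hp, hpy⟩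
    refine ⟨Fin.cons ρ₀ ρ, Fin.cons w₀ w, Fin.cases hρ₀ hρP, Fin.cases hw₀C fun i => hLC (hwL i),
      fun i j hij => ?_⟩
    cases i using Fin.cases with
    | zero =>
      cases j using Fin.cases with
      | zero => exact absurd hij (lt_irrefl _)
      | succ j => simpa [(Finset.mem_filter.mp (hwL j)).2] using hw₀.symm
    | succ i =>
      cases j using Fin.cases with
      | zero => exact absurd hij (Fin.not_lt_zero _)
      | succ j => simpa using hsep i j (Fin.succ_lt_succ_iff.mp hij)

/-- The Balogh–Bollobás bound, for the columns `Q` read on the rows `P`. -/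
theorem exists_card_lt_of_forall_not_isConfig (ℓ : ℕ) (hℓ : 1 ≤ ℓ) (V : Finset ℕ) :
    ∃ C, ∀ {m n : ℕ} (A : MatN m n) (P : Finset (Fin m)) (Q : Finset (Fin n)),
      (∀ i ∈ P, ∀ j ∈ Q, A i j ∈ V) →
      (∀ j₁ ∈ Q, ∀ j₂ ∈ Q, j₁ ≠ j₂ → ∃ i ∈ P, A i j₁ ≠ A i j₂) →
      (∀ a ∈ V, ∀ b ∈ V, a ≠ b → ¬ IsConfig (Imat ℓ a b) A ∧ ¬ IsConfig (Tmat ℓ a b) A) →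
      Q.card < C := by
  obtain ⟨R, hR⟩ := exists_submatrix_eq_Tmat3 V (2 * ℓ)
  refine ⟨(V.card + 2) ^ R, fun A P Q hV hsep hA => ?_⟩
  by_contra! hQ
  obtain ⟨ρ, w, hρ, hw, hρw⟩ :=
    exists_separating_rows_cols A P V le_add_self (by omega) R Q hV hsep hQ
  obtain ⟨σ, hσ, a, b, c, habc⟩ :=
    hR R le_rfl (A.submatrix ρ w) fun i j => hV _ (hρ i) _ (hw j)
  rw [submatrix_submatrix] at habc
  have hentry : ∀ i j, A (ρ (σ i)) (w (σ j)) = Tmat3 (2 * ℓ) a b c i j :=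
    fun i j => congrFun₂ habc i j
  have hbc : b ≠ c := by
    have h01 : (⟨0, by omega⟩ : Fin (2 * ℓ)) < ⟨1, by omega⟩ := Fin.mk_lt_mk.mpr one_pos
    have := hρw _ _ (hσ h01)
    rwa [hentry, hentry, Tmat3_apply_self, Tmat3_apply_of_gt h01, ne_comm] at this
  obtain ⟨hf, hg⟩ := injective_of_submatrix_eq_Tmat3 hbc habc
  have hconf : IsConfig (Tmat3 (2 * ℓ) a b c) A := habc ▸ isConfig_submatrix A hf hg
  obtain ⟨haV, hbV, hcV⟩ := Tmat3_mem_of_forall_mem (by omega) fun i j =>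
    hentry i j ▸ hV _ (hρ _) _ (hw _)
  by_cases hac : a = c
  · subst hac
    rw [Tmat3_eq_Imat] at hconf
    exact (hA b hbV a haV hbc).1 ((isConfig_Imat_of_le (by omega) b a).trans hconf)
  · exact (hA a haV c hcV hac).2 ((isConfig_Tmat_Tmat3 le_rfl a b c).trans hconf)

lemma exists_nonbinary_isConfig_of_map_min (s ℓ : ℕ) (hℓ : 2 ≤ ℓ) :
    ∃ R, ∀ ℓ₂, R ≤ ℓ₂ → ∀ {m n : ℕ} (A : MatN m n), RMat (s + 2) A →
      ∀ M ∈ TFam ℓ₂ (s + 1) \ TFam ℓ₂ 2, IsConfig M.mat (A.map (min · s)) →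
        ∃ M' ∈ TFam ℓ (s + 2) \ TFam ℓ 2, IsConfig M'.mat A := by
  obtain ⟨R, hR⟩ := exists_submatrix_eq_Tmat3 (Finset.range (s + 2)) (2 * ℓ)
  refine ⟨R, fun ℓ₂ hℓ₂ m n A hA M hM hMA => ?_⟩
  obtain ⟨⟨a, b, ha, hb, hab, hMeq⟩, hM2⟩ := hM
  have hab2 : 2 ≤ a ∨ 2 ≤ b := by
    by_contra! h
    exact hM2 ⟨a, b, h.1, h.2, hab, hMeq⟩
  obtain ⟨X, hX, rfl⟩ : ∃ X : MatN ℓ₂ ℓ₂, (X = Imat ℓ₂ a b ∨ X = Tmat ℓ₂ a b) ∧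
      M = ⟨ℓ₂, ℓ₂, X⟩ := by
    rcases hMeq with rfl | rfl
    exacts [⟨_, .inl rfl, rfl⟩, ⟨_, .inr rfl, rfl⟩]
  obtain ⟨f, g, hf, hg, hfg⟩ := hMA
  obtain ⟨σ, hσ, x, d, y, hB⟩ :=
    hR ℓ₂ hℓ₂ (A.submatrix f g) fun i j => Finset.mem_range.mpr (hA _ _)
  have hconf : IsConfig (Tmat3 (2 * ℓ) x d y) A :=
    hB ▸ (isConfig_submatrix _ hσ.injective hσ.injective).trans (isConfig_submatrix A hf hg)
  obtain ⟨hx, hd, hy⟩ := Tmat3_mem_of_forall_mem (K := 2 * ℓ) (a := x) (b := d) (c := y)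
    (V := Finset.range (s + 2)) (by omega)
    fun i j => by rw [← hB]; exact Finset.mem_range.mpr (hA _ _)
  simp only [Finset.mem_range] at hx hd hy
  have hentry : ∀ i j, min (Tmat3 (2 * ℓ) x d y i j) s = X (σ i) (σ j) :=
    fun i j => by rw [← hB]; exact hfg _ _
  have h01 : (⟨0, by omega⟩ : Fin (2 * ℓ)) < ⟨1, by omega⟩ := Fin.mk_lt_mk.mpr one_pos
  have hσ01 := hσ h01
  have e₁₀ := hentry ⟨1, by omega⟩ ⟨0, by omega⟩
  rw [Tmat3_apply_of_lt h01] at e₁₀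
  have e₀₀ := hentry ⟨0, by omega⟩ ⟨0, by omega⟩
  rw [Tmat3_apply_self] at e₀₀
  have e₀₁ := hentry ⟨0, by omega⟩ ⟨1, by omega⟩
  rw [Tmat3_apply_of_gt h01] at e₀₁
  obtain ⟨M', hM', hM'T⟩ : ∃ M' ∈ TFam ℓ (s + 2) \ TFam ℓ 2,
      IsConfig M'.mat (Tmat3 (2 * ℓ) x d y) := by
    refine exists_nonbinary_isConfig_Tmat3 hℓ hx hd hy ?_ ?_ <;>
    rcases hX with rfl | rfl
    all_goals
      simp only [Imat, Tmat, hσ01.ne, hσ01.ne', Fin.lt_def.mp hσ01, lt_irrefl,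
        not_lt.mpr (Fin.lt_def.mp hσ01).le, if_true, if_false] at e₁₀ e₀₀ e₀₁
      omega
  exact ⟨M', hM', hM'T.trans hconf⟩

lemma IsConfig.of_map_min {s k p m n : ℕ} {F : MatN k p} {A : MatN m n} (hF : RMat s F)
    (h : IsConfig F (A.map (min · s))) : IsConfig F A := by
  obtain ⟨f, g, hf, hg, hfg⟩ := h
  refine ⟨f, g, hf, hg, fun i j => ?_⟩
  have h₁ := hfg i j
  have h₂ := hF i j
  simp only [map_apply] at h₁
  omega

lemma exists_card_fiber_map_min_lt (s ℓ : ℕ) (hs : 2 ≤ s) (hℓ : 2 ≤ ℓ) :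
    ∃ C, ∀ {m n : ℕ} (A : MatN m n), RMat (s + 2) A → SimpleM A →
      (∀ M ∈ TFam ℓ (s + 2) \ TFam ℓ 2, ¬ IsConfig M.mat A) →
      ∀ (v : Fin m → ℕ) (Q : Finset (Fin n)), (∀ j ∈ Q, ∀ i, min (A i j) s = v i) →
        Q.card < C := by
  obtain ⟨C, hC⟩ := exists_card_lt_of_forall_not_isConfig ℓ (by omega) {s, s + 1}
  refine ⟨C, fun A hA hS hAT v Q hQ => hC A (Finset.univ.filter fun i => v i = s) Q ?_ ?_ ?_⟩
  · intro i hi j hj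
    have h₁ := hQ j hj i
    have h₂ := (Finset.mem_filter.mp hi).2
    have h₃ := hA i j
    simp only [Finset.mem_insert, Finset.mem_singleton]
    omega
  · intro j₁ hj₁ j₂ hj₂ hne
    by_contra! hP
    refine hne (hS j₁ j₂ fun i => ?_)
    have h₁ := hQ j₁ hj₁ i
    have h₂ := hQ j₂ hj₂ i
    by_cases hi : v i = s
    · exact hP i (Finset.mem_filter.mpr ⟨Finset.mem_univ _, hi⟩)
    · omega
  · intro a ha b hb hab
    simp only [Finset.mem_insert, Finset.mem_singleton] at ha hb
    exact ⟨hAT _ (Imat_mem_nonbinary hℓ (by omega) (by omega) hab (by omega)),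
      hAT _ (Tmat_mem_nonbinary hℓ (by omega) (by omega) hab (by omega))⟩

noncomputable def distinctCols {m n : ℕ} (X : MatN m n) : MatN m (Finset.univ.image Xᵀ).card :=
  fun i j => ((Finset.univ.image Xᵀ).equivFin.symm j : Fin m → ℕ) i

lemma simpleM_distinctCols {m n : ℕ} (X : MatN m n) : SimpleM (distinctCols X) :=
  fun _ _ h => (Finset.univ.image Xᵀ).equivFin.symm.injective (Subtype.ext (funext h))

lemma isConfig_distinctCols {m n : ℕ} (X : MatN m n) : IsConfig (distinctCols X) X := by
  have hcol : ∀ j, ∃ j', ∀ i, distinctCols X i j = X i j' := fun j => by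
    obtain ⟨j', -, hj'⟩ := Finset.mem_image.mp ((Finset.univ.image Xᵀ).equivFin.symm j).2
    exact ⟨j', fun i => by simp [distinctCols, ← hj']⟩
  choose g hg using hcol
  exact ⟨id, g, Function.injective_id,
    fun j₁ j₂ h => simpleM_distinctCols X j₁ j₂ fun i => by rw [hg, hg, h],
    fun i j => (hg j i).symm⟩

def ForbBoundedBy (r ℓ r' ℓ' : ℕ) : Prop :=
  ∃ c : ℕ, ∀ (k p : ℕ) (F : MatN k p), RMat 2 F → ∀ m : ℕ,
    forb m r ((TFam ℓ r \ TFam ℓ 2) ∪ {⟨k, p, F⟩}) ≤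
      c * forb m r' ((TFam ℓ' r' \ TFam ℓ' 2) ∪ {⟨k, p, F⟩})

namespace ForbBoundedBy

lemma refl (r ℓ : ℕ) : ForbBoundedBy r ℓ r ℓ := ⟨1, fun _ _ _ _ _ => by rw [one_mul]⟩

lemma trans {r₁ ℓ₁ r₂ ℓ₂ r₃ ℓ₃ : ℕ} (h₁ : ForbBoundedBy r₁ ℓ₁ r₂ ℓ₂)
    (h₂ : ForbBoundedBy r₂ ℓ₂ r₃ ℓ₃) : ForbBoundedBy r₁ ℓ₁ r₃ ℓ₃ := by
  obtain ⟨c₁, hc₁⟩ := h₁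
  obtain ⟨c₂, hc₂⟩ := h₂
  refine ⟨c₁ * c₂, fun k p F hF m => ?_⟩
  calc _ ≤ c₁ * _ := hc₁ k p F hF m
    _ ≤ c₁ * (c₂ * _) := Nat.mul_le_mul_left _ (hc₂ k p F hF m)
    _ = _ := (mul_assoc _ _ _).symm

end ForbBoundedBy

lemma forbBoundedBy_collapse {s ℓ : ℕ} (hs : 2 ≤ s) (hℓ : 2 ≤ ℓ) :
    ∃ ℓ₂, 2 ≤ ℓ₂ ∧ ForbBoundedBy (s + 2) ℓ (s + 1) ℓ₂ := by
  obtain ⟨R, hR⟩ := exists_nonbinary_isConfig_of_map_min s ℓ hℓ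
  obtain ⟨C, hC⟩ := exists_card_fiber_map_min_lt s ℓ hs hℓ
  refine ⟨max R 2, le_max_right _ _, C, fun k p F hF m => forb_le fun n A hA hS hAF => ?_⟩
  have hAT : ∀ M ∈ TFam ℓ (s + 2) \ TFam ℓ 2, ¬ IsConfig M.mat A :=
    fun M hM => hAF M (.inl hM)
  set A' := A.map (min · s)
  have hn : n ≤ C * (Finset.univ.image A'ᵀ).card :=
    calc n = (Finset.univ : Finset (Fin n)).card := by simp
      _ = _ := Finset.card_eq_sum_card_image A'ᵀ _
      _ ≤ ∑ _v ∈ Finset.univ.image A'ᵀ, C := Finset.sum_le_sum fun v _ =>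
          (hC A hA hS hAT v _ fun j hj i => congrFun (Finset.mem_filter.mp hj).2 i).le
      _ = C * (Finset.univ.image A'ᵀ).card := by rw [Finset.sum_const, smul_eq_mul, mul_comm]
  refine hn.trans (Nat.mul_le_mul_left _ (le_forb (distinctCols A') ?_
    (simpleM_distinctCols A') ?_))
  · refine RMat.of_isConfig (fun i j => ?_) (isConfig_distinctCols A')
    simp only [A', map_apply]
    omega
  · rintro M (hM | rfl) hMA
    · obtain ⟨M', hM', hM'A⟩ := hR _ (le_max_left _ _) A hA M hM
        (hMA.trans (isConfig_distinctCols A'))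
      exact hAT M' hM' hM'A
    · exact hAF _ (.inr rfl) (IsConfig.of_map_min (fun i j => (hF i j).trans_le hs)
        (hMA.trans (isConfig_distinctCols A')))

lemma forbBoundedBy_three (d : ℕ) :
    ∀ {ℓ : ℕ}, 2 ≤ ℓ → ∃ ℓ', 2 ≤ ℓ' ∧ ForbBoundedBy (d + 3) ℓ 3 ℓ' := by
  induction d with
  | zero => exact fun {ℓ} hℓ => ⟨ℓ, hℓ, .refl 3 ℓ⟩
  | succ d ih =>
    intro ℓ hℓ
    obtain ⟨ℓ₂, hℓ₂, h₁⟩ := forbBoundedBy_collapse (s := d + 2) (by omega) hℓ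
    obtain ⟨ℓ', hℓ', h₂⟩ := ih hℓ₂
    exact ⟨ℓ', hℓ', h₁.trans h₂⟩

-- Every member of `𝒯_2(r) \ 𝒯_2(2)` has an entry `x ≥ 2`, and `[x] ∈ 𝒯_1(r) \ 𝒯_1(2)`.
lemma forbBoundedBy_one_two (r : ℕ) : ForbBoundedBy r 1 r 2 := by
  refine ⟨1, fun k p F _ m => (one_mul (forb m r _)).symm ▸ forb_anti ?_⟩
  rintro G (hG | rfl)
  · obtain ⟨i, j, h2, hr⟩ := exists_two_le_entry_of_mem_nonbinary le_rfl hG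
    refine ⟨⟨1, 1, Imat 1 (G.mat i j) 0⟩, .inl ⟨⟨_, 0, hr, by omega, by omega, .inl rfl⟩,
      notMem_TFam_two ⟨0, 0, by simpa [Imat]⟩⟩, fun _ => i, fun _ => j,
      Function.injective_of_subsingleton _, Function.injective_of_subsingleton _, fun a b => ?_⟩
    simp [Imat, Subsingleton.elim a b]
  · exact ⟨_, .inr rfl, .refl _⟩

/-- For `r > 2`, `ℓ ≥ 1`, there are `ℓ' ≥ 1` and a constant `c`,
depending only on `r` and `ℓ`, with
`forb(m, r, (𝒯_ℓ(r) \ 𝒯_ℓ(2)) ∪ {F}) ≤ c · forb(m, 3, (𝒯_{ℓ'}(3) \ 𝒯_{ℓ'}(2)) ∪ {F})`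
for every (0,1)-matrix `F` and every `m ≥ 1`. -/
theorem stmt1 (r ℓ : ℕ) (hr : 2 < r) (hℓ : 1 ≤ ℓ) :
    ∃ ℓ' : ℕ, 1 ≤ ℓ' ∧ ∃ c : ℕ,
      ∀ (k p : ℕ) (F : MatN k p), RMat 2 F →
        ∀ m : ℕ, 1 ≤ m →
          forb m r ((TFam ℓ r \ TFam ℓ 2) ∪ {⟨k, p, F⟩}) ≤
            c * forb m 3 ((TFam ℓ' 3 \ TFam ℓ' 2) ∪ {⟨k, p, F⟩}) := by
  obtain ⟨d, rfl⟩ : ∃ d, r = d + 3 := ⟨r - 3, by omega⟩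
  have h₀ : ForbBoundedBy (d + 3) ℓ (d + 3) (max ℓ 2) := by
    rcases (show ℓ = 1 ∨ 2 ≤ ℓ by omega) with rfl | hℓ₂
    · exact forbBoundedBy_one_two _
    · rw [max_eq_left hℓ₂]
      exact .refl _ _
  obtain ⟨ℓ', hℓ', h₁⟩ := forbBoundedBy_three d (le_max_right ℓ 2)
  obtain ⟨c, hc⟩ := h₀.trans h₁
  exact ⟨ℓ', by omega, c, fun k p F hF m _ => hc k p F hF m⟩
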